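/- arXiv:2506.11516 — 2 statements merged into one kernel-verified Lean document; each statement's English description precedes it below -/
import Mathlib

section
/- Let W₀ be a real d_o × d_i matrix, let x₁, …, x_N ∈ ℝ^{d_i}, and for each i let ℓᵢ : ℝ^{d_o} → ℝ be a differentiable function (the loss ŷ ↦ 𝓛(yᵢ, ŷ) of the i-th training example). Define the training objective L̃(W) = Σ_{i=1}^N ℓᵢ(W xᵢ) on d_o × d_i matrices. Then: (a) the gradient of L̃ at W₀ with respect to the Frobenius inner product equals Σ_{i=1}^N (∇ℓᵢ(W₀ xᵢ)) xᵢᵀ; and (b) setting eᵢ := −η ∇ℓᵢ(W₀ xᵢ) and Ŵ := W₀ − η ∇L̃(W₀) for a learning rate η > 0, for every x_test ∈ ℝ^{d_i} one has Ŵ x_test = W₀ x_test + Σ_{i=1}^N eᵢ (xᵢᵀ x_test); that is, the prediction of the linear model after one gradient-descent step equals W₀ x_test plus the linear-attention output E(Xᵀ x_test), where E = [e₁, …, e_N] and X = [x₁, …, x_N]. -/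
/-!
Under the Frobenius inner product the adjoint of the linear map `W ↦ W v` is `u ↦ u vᵀ`, so the
chain rule gives `∇ L̃(W₀) = Σᵢ ∇ℓᵢ(W₀ xᵢ) xᵢᵀ`. Part (b) then follows from linearity of `W ↦ W x_test`
and `(u vᵀ) w = (vᵀ w) u`.
-/

open scoped BigOperators

/-- The output of the linear model with weight matrix `W` (given as an element of the
Euclidean space of `d_o × d_i` matrices, whose norm is the Frobenius norm) on input `v`. -/
noncomputable def linPred {d_o d_i : ℕ} (W : EuclideanSpace ℝ (Fin d_o × Fin d_i))
    (v : EuclideanSpace ℝ (Fin d_i)) : EuclideanSpace ℝ (Fin d_o) :=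
  WithLp.toLp 2 (fun a => ∑ b, W (a, b) * v b)

open InnerProductSpace

section Gradient

variable {E F : Type*} [NormedAddCommGroup E] [InnerProductSpace ℝ E] [CompleteSpace E]
  [NormedAddCommGroup F] [InnerProductSpace ℝ F] [CompleteSpace F]

theorem HasGradientAt.fun_sum {ι : Type*} {s : Finset ι} {f : ι → E → ℝ} {g : ι → E} {w : E}
    (h : ∀ i ∈ s, HasGradientAt (f i) (g i) w) :
    HasGradientAt (fun v => ∑ i ∈ s, f i v) (∑ i ∈ s, g i) w := by
  rw [hasGradientAt_iff_hasFDerivAt, map_sum]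
  exact HasFDerivAt.fun_sum fun i hi => (h i hi).hasFDerivAt

/-- `hA` says `A† g = g'`. -/
theorem HasGradientAt.comp_continuousLinearMap {f : F → ℝ} {g : F} {g' : E} {w : E}
    (A : E →L[ℝ] F) (hA : ∀ v, ⟪A v, g⟫_ℝ = ⟪v, g'⟫_ℝ) (hf : HasGradientAt f g (A w)) :
    HasGradientAt (fun v => f (A v)) g' w := by
  rw [hasGradientAt_iff_hasFDerivAt] at hf ⊢
  refine (hf.comp w A.hasFDerivAt).congr_fderiv ?_
  ext v
  simpa [real_inner_comm] using hA v

end Gradient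

section LinearModel

variable {d_o d_i : ℕ}

noncomputable def outerProduct (u : EuclideanSpace ℝ (Fin d_o)) (v : EuclideanSpace ℝ (Fin d_i)) :
    EuclideanSpace ℝ (Fin d_o × Fin d_i) :=
  WithLp.toLp 2 fun p => u p.1 * v p.2

noncomputable def linPredCLM (v : EuclideanSpace ℝ (Fin d_i)) :
    EuclideanSpace ℝ (Fin d_o × Fin d_i) →L[ℝ] EuclideanSpace ℝ (Fin d_o) :=
  LinearMap.toContinuousLinearMap
  { toFun := fun W => linPred W v
    map_add' := fun W₁ W₂ => by
      ext a
      simp [linPred, add_mul, Finset.sum_add_distrib]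
    map_smul' := fun c W => by
      ext a
      simp [linPred, Finset.mul_sum, mul_assoc] }

@[simp] theorem linPredCLM_apply (v : EuclideanSpace ℝ (Fin d_i))
    (W : EuclideanSpace ℝ (Fin d_o × Fin d_i)) : linPredCLM v W = linPred W v :=
  rfl

theorem inner_linPred (W : EuclideanSpace ℝ (Fin d_o × Fin d_i)) (v : EuclideanSpace ℝ (Fin d_i))
    (u : EuclideanSpace ℝ (Fin d_o)) :
    ⟪linPred W v, u⟫_ℝ = ⟪W, outerProduct u v⟫_ℝ := by
  simp only [linPred, outerProduct, PiLp.inner_apply, RCLike.inner_apply, conj_trivial,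
    Fintype.sum_prod_type, Finset.mul_sum]
  refine Finset.sum_congr rfl fun a _ => Finset.sum_congr rfl fun b _ => by ring

theorem linPred_outerProduct (u : EuclideanSpace ℝ (Fin d_o)) (v w : EuclideanSpace ℝ (Fin d_i)) :
    linPred (outerProduct u v) w = (∑ b, v b * w b) • u := by
  ext a
  simp only [linPred, outerProduct, PiLp.smul_apply, smul_eq_mul, Finset.sum_mul]
  refine Finset.sum_congr rfl fun b _ => by ring

theorem hasGradientAt_sum_comp_linPred {N : ℕ} (ℓ : Fin N → EuclideanSpace ℝ (Fin d_o) → ℝ)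
    (x : Fin N → EuclideanSpace ℝ (Fin d_i)) (W₀ : EuclideanSpace ℝ (Fin d_o × Fin d_i))
    (hℓ : ∀ i, DifferentiableAt ℝ (ℓ i) (linPred W₀ (x i))) :
    HasGradientAt (fun W => ∑ i, ℓ i (linPred W (x i)))
      (∑ i, outerProduct (gradient (ℓ i) (linPred W₀ (x i))) (x i)) W₀ :=
  HasGradientAt.fun_sum fun i _ =>
    (hℓ i).hasGradientAt.comp_continuousLinearMap (linPredCLM (x i)) (inner_linPred · (x i) _)

end LinearModel

theorem linear_attention_as_gradient_descent_general
    (d_o d_i N : ℕ)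
    (W₀ : EuclideanSpace ℝ (Fin d_o × Fin d_i))
    (x : Fin N → EuclideanSpace ℝ (Fin d_i))
    (ℓ : Fin N → EuclideanSpace ℝ (Fin d_o) → ℝ)
    (hℓ : ∀ i, Differentiable ℝ (ℓ i))
    (Ltilde : EuclideanSpace ℝ (Fin d_o × Fin d_i) → ℝ)
    (hLtilde : ∀ W, Ltilde W = ∑ i, ℓ i (linPred W (x i)))
    (η : ℝ)
    (e : Fin N → EuclideanSpace ℝ (Fin d_o))
    (he : ∀ i, e i = (-η) • gradient (ℓ i) (linPred W₀ (x i)))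
    (What : EuclideanSpace ℝ (Fin d_o × Fin d_i))
    (hWhat : What = W₀ - η • gradient Ltilde W₀) :
    (gradient Ltilde W₀
        = WithLp.toLp 2 (fun p : Fin d_o × Fin d_i => ∑ i, gradient (ℓ i) (linPred W₀ (x i)) p.1 * x i p.2)) ∧
    (∀ xtest : EuclideanSpace ℝ (Fin d_i),
        linPred What xtest
          = linPred W₀ xtest + ∑ i, (∑ b, x i b * xtest b) • e i) := by
  have hgrad : gradient Ltilde W₀
      = ∑ i, outerProduct (gradient (ℓ i) (linPred W₀ (x i))) (x i) := by
    rw [funext hLtilde]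
    exact (hasGradientAt_sum_comp_linPred ℓ x W₀ fun i => hℓ i _).gradient
  refine ⟨?_, fun xtest => ?_⟩
  · rw [hgrad]
    ext p
    simp [outerProduct]
  · rw [hWhat, hgrad, ← linPredCLM_apply, map_sub, map_smul, map_sum]
    simp only [linPredCLM_apply, linPred_outerProduct, he, sub_eq_add_neg, Finset.smul_sum,
      ← Finset.sum_neg_distrib, neg_smul, smul_neg, smul_comm η]

/-- **Linear attention as one step of gradient descent.**
(a) The gradient (w.r.t. the Frobenius inner product) of the training objective
`L̃(W) = Σᵢ ℓᵢ(W xᵢ)` at `W₀` is `Σᵢ (∇ℓᵢ(W₀ xᵢ)) xᵢᵀ`; and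
(b) with `eᵢ := -η ∇ℓᵢ(W₀ xᵢ)` and `Ŵ := W₀ - η ∇L̃(W₀)`, for every test input
`Ŵ x_test = W₀ x_test + Σᵢ (xᵢᵀ x_test) eᵢ`, i.e. the one-step-updated prediction is the
initial prediction plus the linear-attention output with keys `xᵢ` and values `eᵢ`. -/
theorem linear_attention_as_gradient_descent
    (d_o d_i N : ℕ)
    (W₀ : EuclideanSpace ℝ (Fin d_o × Fin d_i))
    (x : Fin N → EuclideanSpace ℝ (Fin d_i))
    (ℓ : Fin N → EuclideanSpace ℝ (Fin d_o) → ℝ)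
    (hℓ : ∀ i, Differentiable ℝ (ℓ i))
    (Ltilde : EuclideanSpace ℝ (Fin d_o × Fin d_i) → ℝ)
    (hLtilde : ∀ W, Ltilde W = ∑ i, ℓ i (linPred W (x i)))
    (η : ℝ) (hη : 0 < η)
    (e : Fin N → EuclideanSpace ℝ (Fin d_o))
    (he : ∀ i, e i = (-η) • gradient (ℓ i) (linPred W₀ (x i)))
    (What : EuclideanSpace ℝ (Fin d_o × Fin d_i))
    (hWhat : What = W₀ - η • gradient Ltilde W₀) :
    (gradient Ltilde W₀
        = WithLp.toLp 2 (fun p : Fin d_o × Fin d_i => ∑ i, gradient (ℓ i) (linPred W₀ (x i)) p.1 * x i p.2)) ∧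
    (∀ xtest : EuclideanSpace ℝ (Fin d_i),
        linPred What xtest
          = linPred W₀ xtest + ∑ i, (∑ b, x i b * xtest b) • e i) :=
  linear_attention_as_gradient_descent_general d_o d_i N W₀ x ℓ hℓ Ltilde hLtilde η e he What hWhat
end

section
/- (Talagrand's contraction lemma.) Fix a sample x₁, …, x_m ∈ 𝒳 and a nonempty class 𝓕 of functions 𝒳 → ℝ that is uniformly bounded on the sample (there is K with |f(xᵢ)| ≤ K for all f ∈ 𝓕 and all i). Let ψ : ℝ → ℝ satisfy ψ(0) = 0 and |ψ(a) − ψ(b)| ≤ L|a − b| for all a, b ∈ ℝ. Then 𝔼_σ[ sup_{f ∈ 𝓕} (1/m) Σ_{i=1}^m σᵢ ψ(f(xᵢ)) ] ≤ L · 𝔼_σ[ sup_{f ∈ 𝓕} (1/m) Σ_{i=1}^m σᵢ f(xᵢ) ], where σ = (σ₁, …, σ_m) is distributed uniformly on {−1, +1}^m. -/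
/-!
Replace `ψ ∘ f` by `L • f` one sample point `k` at a time. Pair each sign vector `σ` having
`σ k = 1` with the vector obtained by flipping that sign; writing `A f` for the remaining part of
the Rademacher sum and `b f = f (x k)`, the pair contributes
`sup (A + ψ ∘ b) + sup (A - ψ ∘ b)`. For any two functions `f, g`, ordering them by `b` and using
`ψ (b f) - ψ (b g) ≤ L |b f - b g|` bounds `(A f + ψ (b f)) + (A g - ψ (b g))` by
`sup (A + L b) + sup (A - L b)`. Flipping a sign permutes `{−1, +1}^m`, so summing these pair
inequalities compares the full sums over `σ`.
-/

open scoped BigOperators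

/-- The ±1 sign associated to a Boolean: uniform `σ : Fin m → Bool` encodes a uniform
Rademacher vector `σ : {−1,+1}^m`. -/
noncomputable def radSign (b : Bool) : ℝ := if b then 1 else -1

open Finset Function

lemma abs_radSign (b : Bool) : |radSign b| = 1 := by
  cases b <;> simp [radSign]

theorem ciSup_add_add_ciSup_sub_le_of_sub_le_abs_sub {ι : Type*} (A a b : ι → ℝ)
    (hab : ∀ i j, a i - a j ≤ |b i - b j|)
    (hadd : BddAbove (Set.range fun i => A i + b i))
    (hsub : BddAbove (Set.range fun i => A i - b i)) :
    (⨆ i, A i + a i) + (⨆ i, A i - a i) ≤ (⨆ i, A i + b i) + (⨆ i, A i - b i) := by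
  cases isEmpty_or_nonempty ι
  · simp
  refine ciSup_add_ciSup_le fun i j => ?_
  have hij := hab i j
  rcases le_total (b j) (b i) with h | h
  · rw [abs_of_nonneg (sub_nonneg.2 h)] at hij
    linarith [le_ciSup hadd i, le_ciSup hsub j]
  · rw [abs_of_nonpos (sub_nonpos.2 h)] at hij
    linarith [le_ciSup hadd j, le_ciSup hsub i]

theorem sum_le_sum_of_add_le_add_perm {α : Type*} [Fintype α] (e : Equiv.Perm α)
    {g h : α → ℝ} (hgh : ∀ a, g a + g (e a) ≤ h a + h (e a)) : ∑ a, g a ≤ ∑ a, h a := by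
  have hsum := sum_le_sum fun a (_ : a ∈ univ) => hgh a
  simp only [sum_add_distrib, Equiv.sum_comp e] at hsum
  linarith

section FlipAt

variable {n : Type*} [DecidableEq n]

def flipAt (k : n) : Equiv.Perm (n → Bool) :=
  Involutive.toPerm (fun σ => update σ k (!σ k)) fun σ => by simp

@[simp]
lemma flipAt_apply_self (k : n) (σ : n → Bool) : flipAt k σ k = !σ k :=
  update_self _ _ _

lemma flipAt_apply_of_ne {k i : n} (h : i ≠ k) (σ : n → Bool) : flipAt k σ i = σ i :=
  update_of_ne h _ _

@[simp]
lemma flipAt_flipAt (k : n) (σ : n → Bool) : flipAt k (flipAt k σ) = σ :=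
  (flipAt k).symm_apply_apply σ

end FlipAt

section Rademacher

variable {ι n : Type*} [Fintype n]

/-- `u f i` stands for the value of the function `f` at the `i`-th sample point. -/
noncomputable def rademacherSup (u : ι → n → ℝ) (σ : n → Bool) : ℝ :=
  ⨆ f, ∑ i, radSign (σ i) * u f i

lemma rademacherSup_const_mul {c : ℝ} (hc : 0 ≤ c) (u : ι → n → ℝ) (σ : n → Bool) :
    rademacherSup (fun f i => c * u f i) σ = c * rademacherSup u σ := by
  simp only [rademacherSup, mul_left_comm _ c, ← mul_sum, Real.mul_iSup_of_nonneg hc]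

lemma bddAbove_range_sum_radSign_mul {u : ι → n → ℝ} {B : ℝ} (hu : ∀ f i, |u f i| ≤ B)
    (σ : n → Bool) : BddAbove (Set.range fun f => ∑ i, radSign (σ i) * u f i) := by
  refine ⟨Fintype.card n * B, ?_⟩
  rintro _ ⟨f, rfl⟩
  calc ∑ i, radSign (σ i) * u f i ≤ ∑ _i : n, B := sum_le_sum fun i _ =>
        (le_abs_self _).trans (by rw [abs_mul, abs_radSign, one_mul]; exact hu f i)
    _ = Fintype.card n * B := by simp

variable [DecidableEq n]

lemma sum_radSign_mul_of_apply_eq_true {σ : n → Bool} {k : n} (hσ : σ k = true)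
    (c : n → ℝ) :
    ∑ i, radSign (σ i) * c i = (∑ i ∈ univ.erase k, radSign (σ i) * c i) + c k := by
  rw [← sum_erase_add _ _ (mem_univ k), hσ, radSign, if_pos rfl, one_mul]

lemma sum_radSign_flipAt_mul_of_apply_eq_true {σ : n → Bool} {k : n} (hσ : σ k = true)
    (c : n → ℝ) :
    ∑ i, radSign (flipAt k σ i) * c i =
      (∑ i ∈ univ.erase k, radSign (σ i) * c i) - c k := by
  rw [← sum_erase_add _ _ (mem_univ k),
    sum_congr rfl fun i hi => by rw [flipAt_apply_of_ne (ne_of_mem_erase hi)]]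
  simp [hσ, radSign, sub_eq_add_neg]

variable {u w : ι → n → ℝ} {k : n}

lemma rademacherSup_add_flipAt_le_of_apply_eq_true (hoff : ∀ f i, i ≠ k → u f i = w f i)
    (hk : ∀ f g, u f k - u g k ≤ |w f k - w g k|)
    (hw : ∀ σ : n → Bool, BddAbove (Set.range fun f => ∑ i, radSign (σ i) * w f i))
    {σ : n → Bool} (hσ : σ k = true) :
    rademacherSup u σ + rademacherSup u (flipAt k σ) ≤
      rademacherSup w σ + rademacherSup w (flipAt k σ) := by
  have hA : ∀ f, ∑ i ∈ univ.erase k, radSign (σ i) * u f i =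
      ∑ i ∈ univ.erase k, radSign (σ i) * w f i := fun f =>
    sum_congr rfl fun i hi => by rw [hoff f i (ne_of_mem_erase hi)]
  have hwσ := hw σ
  have hwflip := hw (flipAt k σ)
  simp only [rademacherSup, sum_radSign_mul_of_apply_eq_true hσ,
    sum_radSign_flipAt_mul_of_apply_eq_true hσ, hA] at hwσ hwflip ⊢
  exact ciSup_add_add_ciSup_sub_le_of_sub_le_abs_sub _ _ _ hk hwσ hwflip

lemma sum_rademacherSup_le_of_eq_off (hoff : ∀ f i, i ≠ k → u f i = w f i)
    (hk : ∀ f g, u f k - u g k ≤ |w f k - w g k|)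
    (hw : ∀ σ : n → Bool, BddAbove (Set.range fun f => ∑ i, radSign (σ i) * w f i)) :
    ∑ σ, rademacherSup u σ ≤ ∑ σ, rademacherSup w σ := by
  refine sum_le_sum_of_add_le_add_perm (flipAt k) fun σ => ?_
  cases hσ : σ k
  · have := rademacherSup_add_flipAt_le_of_apply_eq_true hoff hk hw (σ := flipAt k σ)
      (by simp [hσ])
    rwa [flipAt_flipAt, add_comm, add_comm (rademacherSup w _)] at this
  · exact rademacherSup_add_flipAt_le_of_apply_eq_true hoff hk hw hσ

/-- The Ledoux–Talagrand comparison inequality for Rademacher sums. -/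
theorem sum_rademacherSup_le_of_sub_le_abs_sub {B : ℝ} (hu : ∀ f i, |u f i| ≤ B)
    (hw : ∀ f i, |w f i| ≤ B) (huw : ∀ i f g, u f i - u g i ≤ |w f i - w g i|) :
    ∑ σ, rademacherSup u σ ≤ ∑ σ, rademacherSup w σ := by
  let hybrid (s : Finset n) (f : ι) (i : n) : ℝ := if i ∈ s then w f i else u f i
  suffices ∀ s, ∑ σ, rademacherSup u σ ≤ ∑ σ, rademacherSup (hybrid s) σ by
    simpa [hybrid] using this univ
  intro s
  induction s using Finset.induction_on with
  | empty => simp [hybrid]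
  | insert k s hks ih =>
    refine ih.trans (sum_rademacherSup_le_of_eq_off (k := k) ?_ ?_ ?_)
    · intro f i hi
      simp [hybrid, hi]
    · intro f g
      simpa [hybrid, hks] using huw k f g
    · refine bddAbove_range_sum_radSign_mul (B := B) fun f i => ?_
      dsimp only [hybrid]
      split_ifs
      exacts [hw f i, hu f i]

theorem sum_rademacherSup_comp_le {v : ι → n → ℝ} {K : ℝ} (hv : ∀ f i, |v f i| ≤ K)
    {ψ : ℝ → ℝ} {L : ℝ} (hψ : ∀ a b, |ψ a - ψ b| ≤ L * |a - b|) :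
    ∑ σ, rademacherSup (fun f i => ψ (v f i)) σ ≤ L * ∑ σ, rademacherSup v σ := by
  have hL : 0 ≤ L := by simpa using (abs_nonneg _).trans (hψ 1 0)
  have hLv : ∀ f i, |L * v f i| ≤ L * K := fun f i => by
    rw [abs_mul, abs_of_nonneg hL]
    exact mul_le_mul_of_nonneg_left (hv f i) hL
  have hψv : ∀ f i, |ψ (v f i)| ≤ |ψ 0| + L * K := fun f i => by
    have := hψ (v f i) 0
    rw [sub_zero] at this
    linarith [abs_sub_abs_le_abs_sub (ψ (v f i)) (ψ 0), mul_le_mul_of_nonneg_left (hv f i) hL]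
  calc ∑ σ, rademacherSup (fun f i => ψ (v f i)) σ
      ≤ ∑ σ, rademacherSup (fun f i => L * v f i) σ := by
        refine sum_rademacherSup_le_of_sub_le_abs_sub hψv
          (fun f i => (hLv f i).trans (le_add_of_nonneg_left (abs_nonneg _))) fun i f g => ?_
        rw [← mul_sub, abs_mul, abs_of_nonneg hL]
        exact (le_abs_self _).trans (hψ _ _)
    _ = L * ∑ σ, rademacherSup v σ := by
        simp only [rademacherSup_const_mul hL, mul_sum]

end Rademacher

theorem talagrand_contraction_general {𝒳 : Type*} (m : ℕ) (x : Fin m → 𝒳)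
    (F : Set (𝒳 → ℝ))
    (K : ℝ) (hK : ∀ f ∈ F, ∀ i, |f (x i)| ≤ K)
    (ψ : ℝ → ℝ) (L : ℝ)
    (hψ : ∀ a b : ℝ, |ψ a - ψ b| ≤ L * |a - b|) :
    (1 / 2 ^ m : ℝ) * ∑ σ : Fin m → Bool,
        (⨆ f : F, (1 / (m : ℝ)) * ∑ i, radSign (σ i) * ψ ((f : 𝒳 → ℝ) (x i)))
      ≤ L * ((1 / 2 ^ m : ℝ) * ∑ σ : Fin m → Bool,
        (⨆ f : F, (1 / (m : ℝ)) * ∑ i, radSign (σ i) * (f : 𝒳 → ℝ) (x i))) := by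
  have key := sum_rademacherSup_comp_le (v := fun (f : F) i => (f : 𝒳 → ℝ) (x i))
    (fun f i => hK f f.2 i) hψ
  have hm : (0 : ℝ) ≤ 1 / m := by positivity
  simp only [← Real.mul_iSup_of_nonneg hm, ← mul_sum]
  have hscaled := mul_le_mul_of_nonneg_left key (by positivity : (0 : ℝ) ≤ 1 / 2 ^ m * (1 / m))
  simp only [rademacherSup] at hscaled
  linear_combination hscaled

/-- **Talagrand's contraction lemma** (empirical Rademacher complexity version).
For a fixed sample `x₁, …, x_m`, a nonempty uniformly bounded class `𝓕` of real-valued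
functions, and `ψ : ℝ → ℝ` with `ψ 0 = 0` that is `L`-Lipschitz,
`𝔼_σ[ sup_{f∈𝓕} (1/m) Σᵢ σᵢ ψ(f(xᵢ)) ] ≤ L · 𝔼_σ[ sup_{f∈𝓕} (1/m) Σᵢ σᵢ f(xᵢ) ]`,
the expectation being over `σ` uniform on `{−1,+1}^m`. -/
theorem talagrand_contraction {𝒳 : Type*} (m : ℕ) (x : Fin m → 𝒳)
    (F : Set (𝒳 → ℝ)) (hFne : F.Nonempty)
    (K : ℝ) (hK : ∀ f ∈ F, ∀ i, |f (x i)| ≤ K)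
    (ψ : ℝ → ℝ) (L : ℝ)
    (hψ0 : ψ 0 = 0)
    (hψ : ∀ a b : ℝ, |ψ a - ψ b| ≤ L * |a - b|) :
    (1 / 2 ^ m : ℝ) * ∑ σ : Fin m → Bool,
        (⨆ f : F, (1 / (m : ℝ)) * ∑ i, radSign (σ i) * ψ ((f : 𝒳 → ℝ) (x i)))
      ≤ L * ((1 / 2 ^ m : ℝ) * ∑ σ : Fin m → Bool,
        (⨆ f : F, (1 / (m : ℝ)) * ∑ i, radSign (σ i) * (f : 𝒳 → ℝ) (x i))) :=
  talagrand_contraction_general m x F K hK ψ L hψ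
end
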